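/- Let G be a normed gyrogroup. Every transformation of the form L_a ∘ γ with a ∈ G and γ ∈ GYR(G) is an isometry of the metric space (G, d_η), where d_η(x, y) = ‖⊖x ⊕ y‖. -/

import Mathlib

/-- A gyrogroup: a set with a binary operation `op`, a left identity `e`, left inverses
`inv`, and gyroautomorphisms `gyr a b` (bijective and operation-preserving) satisfying the
left gyroassociative law and the left loop property. -/
class Gyrogroup (G : Type*) where
  /-- the gyrogroup operation `⊕` -/
  op : G → G → G
  /-- the identity element -/
  e : G
  /-- the inverse `⊖a` -/
  inv : G → G
  /-- (G1) `e ⊕ a = a` -/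
  op_e : ∀ a : G, op e a = a
  /-- (G2) `⊖a ⊕ a = e` -/
  op_inv : ∀ a : G, op (inv a) a = e
  /-- the gyroautomorphism `gyr[a, b]` -/
  gyr : G → G → G → G
  /-- (G3) `gyr[a, b]` is bijective -/
  gyr_bijective : ∀ a b : G, Function.Bijective (gyr a b)
  /-- (G3) `gyr[a, b]` preserves the operation -/
  gyr_op : ∀ a b x y : G, gyr a b (op x y) = op (gyr a b x) (gyr a b y)
  /-- (G3) the left gyroassociative law -/
  gyrassoc : ∀ a b c : G, op a (op b c) = op (op a b) (gyr a b c)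
  /-- (G4) the left loop property -/
  loop : ∀ a b : G, gyr (op a b) b = gyr a b

namespace Gyrogroup

variable {G : Type*} [Gyrogroup G]

theorem key (x z : G) : op (inv x) (op x z) = gyr (inv x) x z := by
  rw [gyrassoc, op_inv, op_e]

theorem L_injective (x : G) : Function.Injective (op x) := by
  intro z₁ z₂ h
  have h1 : gyr (inv x) x z₁ = gyr (inv x) x z₂ := by
    rw [← key, ← key, h]
  exact (gyr_bijective (inv x) x).1 h1

theorem L_surjective (x : G) : Function.Surjective (op x) := by
  intro w
  obtain ⟨z, hz⟩ := (gyr_bijective (inv x) x).2 (op (inv x) w)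
  exact ⟨z, L_injective (inv x) (by rw [key, hz])⟩

theorem L_bijective (x : G) : Function.Bijective (op x) :=
  ⟨L_injective x, L_surjective x⟩

/-- The left gyrotranslation `L_a : x ↦ a ⊕ x` as a permutation of `G`. -/
noncomputable def Lperm (a : G) : Equiv.Perm G := Equiv.ofBijective (op a) (L_bijective a)

/-- The gyroautomorphism `gyr[a, b]` as a permutation of `G`. -/
noncomputable def gyrPerm (a b : G) : Equiv.Perm G := Equiv.ofBijective (gyr a b) (gyr_bijective a b)

/-- `GYR(G)`: the subgroup of `Sym(G)` generated by all gyroautomorphisms. -/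
def GYR (G : Type*) [Gyrogroup G] : Subgroup (Equiv.Perm G) :=
  Subgroup.closure {π : Equiv.Perm G | ∃ a b : G, π = gyrPerm a b}

/-- `Γₘ = {L_a ∘ γ : a ∈ G, γ ∈ GYR(G)}`, a subgroup of `Sym(G)`. -/
def Γm (G : Type*) [Gyrogroup G] : Set (Equiv.Perm G) :=
  {T : Equiv.Perm G | ∃ a : G, ∃ γ ∈ GYR G, T = Lperm a * γ}

end Gyrogroup

/-- A normed gyrogroup: a gyrogroup equipped with a gyronorm `‖·‖ : G → ℝ` that is
nonnegative (vanishing exactly at the identity), invariant under taking inverses,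
subadditive, and invariant under gyrations. -/
class NormedGyrogroup (G : Type*) extends Gyrogroup G where
  /-- the gyronorm -/
  gnorm : G → ℝ
  gnorm_nonneg : ∀ x : G, 0 ≤ gnorm x
  gnorm_eq_zero_iff : ∀ x : G, gnorm x = 0 ↔ x = e
  gnorm_inv : ∀ x : G, gnorm (inv x) = gnorm x
  gnorm_op_le : ∀ x y : G, gnorm (op x y) ≤ gnorm x + gnorm y
  gnorm_gyr : ∀ a b x : G, gnorm (gyr a b x) = gnorm x

/-- The gyronorm metric `d_η(x, y) = ‖⊖x ⊕ y‖` of a normed gyrogroup. -/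
def dEta {G : Type*} [NormedGyrogroup G] (x y : G) : ℝ :=
  NormedGyrogroup.gnorm (Gyrogroup.op (Gyrogroup.inv x) y)


namespace Gyrogroup

variable {G : Type*} [Gyrogroup G]

@[simp]
theorem Lperm_apply (a x : G) : Lperm a x = op a x := rfl

theorem gyr_e_left (b c : G) : gyr e b c = c := by
  apply L_injective b
  simpa only [op_e] using (gyrassoc e b c).symm

theorem gyr_inv_left_self (a c : G) : gyr (inv a) a c = c := by
  rw [← loop, op_inv, gyr_e_left]

theorem inv_op_cancel_left (a z : G) : op (inv a) (op a z) = z := by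
  rw [gyrassoc, op_inv, op_e, gyr_inv_left_self]

theorem map_e_of_map_op {f : G → G} (hf : ∀ x y, f (op x y) = op (f x) (f y)) : f e = e := by
  have hidem : f e = op (f e) (f e) := by rw [← hf, op_e]
  calc f e = op (inv (f e)) (op (f e) (f e)) := (inv_op_cancel_left _ _).symm
    _ = e := by rw [← hidem, op_inv]

theorem op_e_right (a : G) : op a e = a := by
  have h : op (inv (inv a)) e = a := by rw [← op_inv a, inv_op_cancel_left]
  have h' := gyrassoc (inv (inv a)) e e
  rw [op_e, map_e_of_map_op (gyr_op _ _), h] at h'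
  exact h'.symm

theorem inv_inv (a : G) : inv (inv a) = a := by
  rw [← op_e_right (inv (inv a)), ← op_inv a, inv_op_cancel_left]

theorem op_inv_right (a : G) : op a (inv a) = e := by
  simpa only [inv_inv] using op_inv (inv a)

theorem op_inv_cancel_left (a z : G) : op a (op (inv a) z) = z := by
  simpa only [inv_inv] using inv_op_cancel_left (inv a) z

theorem eq_inv_of_op_eq_e {a b : G} (h : op b a = e) : b = inv a := by
  have hgyr : gyr b a = gyr e a := by rw [← h, loop]
  simpa only [op_inv_right, op_e_right, h, op_e, hgyr, gyr_e_left] using gyrassoc b a (inv a)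

theorem map_inv_of_map_op {f : G → G} (hf : ∀ x y, f (op x y) = op (f x) (f y)) (x : G) :
    f (inv x) = inv (f x) :=
  eq_inv_of_op_eq_e (by rw [← hf, op_inv, map_e_of_map_op hf])

theorem inv_op_op_eq_gyr (a b c : G) : op (inv (op a b)) (op a c) = gyr a b (op (inv b) c) := by
  conv_lhs => rw [← op_inv_cancel_left b c, gyrassoc a b]
  exact inv_op_cancel_left _ _

variable (G) in
def aut : Subgroup (Equiv.Perm G) where
  carrier := {π | ∀ x y, π (op x y) = op (π x) (π y)}
  one_mem' _ _ := rfl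
  mul_mem' {π σ} hπ hσ x y := by simp only [Equiv.Perm.mul_apply, hσ x y, hπ (σ x) (σ y)]
  inv_mem' := by
    intro π (hπ : ∀ x y, π (op x y) = op (π x) (π y)) x y
    apply π.injective
    simp only [hπ, Equiv.Perm.coe_inv, Equiv.apply_symm_apply]

theorem GYR_le_aut : GYR G ≤ aut G := by
  rw [GYR, Subgroup.closure_le]
  rintro _ ⟨a, b, rfl⟩
  exact gyr_op a b

end Gyrogroup

namespace NormedGyrogroup

open Gyrogroup

variable {G : Type*} [NormedGyrogroup G]

variable (G) in
def gnormStab : Subgroup (Equiv.Perm G) where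
  carrier := {π | ∀ x, gnorm (π x) = gnorm x}
  one_mem' _ := rfl
  mul_mem' hπ hσ x := (hπ _).trans (hσ x)
  inv_mem' := by
    intro π hπ x
    rw [← hπ, Equiv.Perm.coe_inv, Equiv.apply_symm_apply]

theorem GYR_le_gnormStab : GYR G ≤ gnormStab G := by
  rw [GYR, Subgroup.closure_le]
  rintro _ ⟨a, b, rfl⟩
  exact gnorm_gyr a b

theorem dEta_op_left (a x y : G) : dEta (op a x) (op a y) = dEta x y := by
  rw [dEta, inv_op_op_eq_gyr, gnorm_gyr, dEta]

theorem dEta_map {π : Equiv.Perm G} (hπ : π ∈ aut G ⊓ gnormStab G) (x y : G) :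
    dEta (π x) (π y) = dEta x y := by
  obtain ⟨hop, hnorm⟩ := Subgroup.mem_inf.mp hπ
  rw [dEta, ← map_inv_of_map_op hop, ← hop, hnorm, dEta]

end NormedGyrogroup

open Gyrogroup in
/-- In a normed gyrogroup `G`, every transformation of the form `L_a ∘ γ` with `a ∈ G` and
`γ ∈ GYR(G)` is an isometry of the metric space `(G, d_η)`. -/
theorem stmt18 {G : Type*} [NormedGyrogroup G] (a : G) (γ : Equiv.Perm G)
    (hγ : γ ∈ GYR G) :
    ∀ x y : G, dEta ((Lperm a * γ) x) ((Lperm a * γ) y) = dEta x y := by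
  intro x y
  rw [Equiv.Perm.mul_apply, Equiv.Perm.mul_apply, Lperm_apply, Lperm_apply,
    NormedGyrogroup.dEta_op_left]
  exact NormedGyrogroup.dEta_map (le_inf GYR_le_aut NormedGyrogroup.GYR_le_gnormStab hγ) x y
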